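/- arXiv:2109.06549 — 2 statements merged into one kernel-verified Lean document; each statement's English description precedes it below -/
import Mathlib

section
/- Let U be an irreducible almost upper triangular transition matrix on ℕ and, for each n, let ρ^{(n)} be an invariant probability distribution of the projection U^{(n)} of U onto {0,…,n} (extended by 0 to all of ℕ). Then for any ρ : ℕ → ℝ with ρ a ≥ 0 for all a and ∑_a ρ a = 1: ρ is an invariant measure for U (equivalently, U is positive recurrent with stationary distribution ρ) if and only if ρ^{(n)} a → ρ a as n → ∞ for every a ∈ ℕ. -/
/-!
For an almost upper triangular `U`, the `b`-th invariance equation `∑ₐ π a * U a b = π b` only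
involves `π 0, …, π (b + 1)`, and irreducibility forces `U (b + 1) b > 0`, so it determines
`π (b + 1)` from `π 0, …, π b`. Hence the solutions of the first `n` equations are all
proportional on `{0, …, n}`. The projection `U⁽ⁿ⁾` has the same first `n` columns as `U`, so
`ρ⁽ⁿ⁾` solves them; normalising by its total mass `1` gives `ρ⁽ⁿ⁾ a = ρ a / ∑_{a' ≤ n} ρ a'` for
an invariant `ρ`, which tends to `ρ a`. Conversely, each equation is a finite sum, so it passes
to the pointwise limit.
-/

open Filter Topology Finset

def MatIrreducible (M : ℕ → ℕ → ℝ) : Prop :=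
  ∀ i j : ℕ, ∃ (n : ℕ) (x : ℕ → ℕ), 0 < n ∧ x 0 = i ∧ x n = j ∧
    ∀ k, k < n → 0 < M (x k) (x (k + 1))

/-- The projection `M⁽ⁿ⁾` onto `{0, …, n}`. -/
noncomputable def projTM (M : ℕ → ℕ → ℝ) (n : ℕ) : ℕ → ℕ → ℝ :=
  fun i j =>
    if j < n then M i j
    else if j = n then (∑' k : ℕ, if n ≤ k then M i k else 0)
    else 0

def AlmostUpperTriangular (M : ℕ → ℕ → ℝ) : Prop :=
  ∀ i j, j + 1 < i → M i j = 0

/-- For almost upper triangular `M`, the `b`-th equation of `f M = f`. -/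
def ColumnBalance (M : ℕ → ℕ → ℝ) (f : ℕ → ℝ) (b : ℕ) : Prop :=
  ∑ a ∈ range (b + 2), f a * M a b = f b

lemma Nat.exists_lt_and_not_succ {p : ℕ → Prop} {n : ℕ} (h0 : p 0) (hn : ¬ p n) :
    ∃ k < n, p k ∧ ¬ p (k + 1) := by
  induction n with
  | zero => exact absurd h0 hn
  | succ n ih =>
    by_cases hpn : p n
    · exact ⟨n, n.lt_succ_self, hpn, hn⟩
    · obtain ⟨k, hk, hpk⟩ := ih hpn
      exact ⟨k, hk.trans n.lt_succ_self, hpk⟩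

section

variable {M : ℕ → ℕ → ℝ}

/-- A path from `b + 1` down to `b` must cross from above `b` to at most `b` in one step,
and an almost upper triangular matrix only allows the step `b + 1 → b` for that. -/
lemma MatIrreducible.subdiag_pos (hM : AlmostUpperTriangular M) (hirr : MatIrreducible M)
    (b : ℕ) : 0 < M (b + 1) b := by
  obtain ⟨n, x, -, hx0, hxn, hstep⟩ := hirr (b + 1) b
  obtain ⟨k, hkn, hk, hk1⟩ :=
    Nat.exists_lt_and_not_succ (p := fun k => b < x k) (n := n) (by simp [hx0]) (by simp [hxn])
  have hpos := hstep k hkn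
  have hjump : ¬ x (k + 1) + 1 < x k := fun h => (hM _ _ h ▸ hpos).false
  obtain ⟨h1, h2⟩ : x k = b + 1 ∧ x (k + 1) = b := by omega
  rwa [h1, h2] at hpos

lemma AlmostUpperTriangular.sum_range_eq (hM : AlmostUpperTriangular M) (f : ℕ → ℝ)
    {b m : ℕ} (hm : b + 2 ≤ m) :
    ∑ a ∈ range m, f a * M a b = ∑ a ∈ range (b + 2), f a * M a b := by
  refine (sum_subset (range_subset_range.2 hm) fun a _ ha => ?_).symm
  rw [hM a b (by simp at ha; omega), mul_zero]

lemma AlmostUpperTriangular.hasSum_iff_columnBalance (hM : AlmostUpperTriangular M)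
    {f : ℕ → ℝ} {b : ℕ} : HasSum (fun a => f a * M a b) (f b) ↔ ColumnBalance M f b := by
  have hfin : HasSum (fun a => f a * M a b) (∑ a ∈ range (b + 2), f a * M a b) :=
    hasSum_sum_of_ne_finset_zero fun a ha => by rw [hM a b (by simp at ha; omega), mul_zero]
  exact ⟨fun h => h.unique hfin |>.symm, fun h => h ▸ hfin⟩

lemma AlmostUpperTriangular.columnBalance_of_projTM (hM : AlmostUpperTriangular M)
    {f : ℕ → ℝ} {n b : ℕ} (hb : b < n)
    (hinv : ∑ a ∈ range (n + 1), f a * projTM M n a b = f b) : ColumnBalance M f b := by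
  simp only [projTM, hb, if_true] at hinv
  rwa [hM.sum_range_eq f (by omega)] at hinv

lemma ColumnBalance.mul_const {f : ℕ → ℝ} {b : ℕ} (hf : ColumnBalance M f b) (c : ℝ) :
    ColumnBalance M (fun a => f a * c) b := by
  unfold ColumnBalance at *
  dsimp only
  rw [← hf, sum_mul]
  exact sum_congr rfl fun a _ => by ring

lemma ColumnBalance.of_tendsto {ρ : ℕ → ℕ → ℝ} {ρlim : ℕ → ℝ} {b : ℕ}
    (hlim : ∀ a, Tendsto (fun n => ρ n a) atTop (𝓝 (ρlim a)))
    (hρ : ∀ᶠ n in atTop, ColumnBalance M (ρ n) b) : ColumnBalance M ρlim b :=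
  tendsto_nhds_unique_of_eventuallyEq
    (tendsto_finsetSum _ fun a _ => (hlim a).mul_const (M a b)) (hlim b) hρ

lemma eqOn_of_columnBalance {n : ℕ} (hd : ∀ b < n, M (b + 1) b ≠ 0) {f g : ℕ → ℝ}
    (hf : ∀ b < n, ColumnBalance M f b) (hg : ∀ b < n, ColumnBalance M g b) (h0 : f 0 = g 0) :
    ∀ a ≤ n, f a = g a := by
  intro a
  induction a using Nat.strong_induction_on with
  | _ a ih =>
    rcases a with _ | b
    · exact fun _ => h0
    intro hb
    have hfb := hf b hb
    have hgb := hg b hb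
    unfold ColumnBalance at hfb hgb
    rw [sum_range_succ, ih b b.lt_succ_self (by omega),
      sum_congr rfl fun a ha => by rw [ih a (by simp at ha; omega) (by simp at ha; omega)]]
      at hfb
    rw [sum_range_succ] at hgb
    exact mul_right_cancel₀ (hd b hb) (by linarith)

lemma mul_eq_mul_of_columnBalance {n : ℕ} (hd : ∀ b < n, M (b + 1) b ≠ 0) {f g : ℕ → ℝ}
    (hf : ∀ b < n, ColumnBalance M f b) (hg : ∀ b < n, ColumnBalance M g b) :
    ∀ a ≤ n, f a * g 0 = g a * f 0 :=
  eqOn_of_columnBalance hd (fun b hb => (hf b hb).mul_const _)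
    (fun b hb => (hg b hb).mul_const _) (mul_comm _ _)

lemma eq_zero_of_columnBalance (hd : ∀ b, M (b + 1) b ≠ 0) {f : ℕ → ℝ}
    (hf : ∀ b, ColumnBalance M f b) (h0 : f 0 = 0) : f = 0 := by
  have hzero : ∀ b, ColumnBalance M 0 b := fun b => by simp [ColumnBalance]
  funext a
  exact eqOn_of_columnBalance (n := a) (fun b _ => hd b) (fun b _ => hf b)
    (fun b _ => hzero b) h0 a le_rfl

end

lemma tendsto_of_proportional {ρ : ℕ → ℕ → ℝ} {ρlim : ℕ → ℝ}
    (hρsum : ∀ n, ∑ a ∈ range (n + 1), ρ n a = 1) (hρlim1 : HasSum ρlim 1) (hρlim0 : ρlim 0 ≠ 0)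
    (hprop : ∀ n, ∀ a ≤ n, ρlim a * ρ n 0 = ρ n a * ρlim 0) (a : ℕ) :
    Tendsto (fun n => ρ n a) atTop (𝓝 (ρlim a)) := by
  set T : ℕ → ℝ := fun n => ∑ a ∈ range (n + 1), ρlim a
  have hT : Tendsto T atTop (𝓝 1) :=
    hρlim1.tendsto_sum_nat.comp (tendsto_add_atTop_nat 1)
  have hmass : ∀ n, T n * ρ n 0 = ρlim 0 := fun n => by
    rw [← one_mul (ρlim 0), ← hρsum n, sum_mul, sum_mul]
    exact sum_congr rfl fun a ha => hprop n a (by simpa [Nat.lt_succ_iff] using ha)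
  have hform : ∀ n ≥ a, ρ n a = ρlim a * (T n)⁻¹ := fun n hn => by
    have hTn : T n ≠ 0 := left_ne_zero_of_mul (hmass n ▸ hρlim0)
    rw [eq_mul_inv_iff_mul_eq₀ hTn]
    apply mul_right_cancel₀ hρlim0
    linear_combination (-T n) * hprop n a hn + ρlim a * hmass n
  have hlim : Tendsto (fun n => ρlim a * (T n)⁻¹) atTop (𝓝 (ρlim a)) := by
    simpa using (hT.inv₀ one_ne_zero).const_mul (ρlim a)
  exact hlim.congr' (eventually_atTop.2 ⟨a, fun n hn => (hform n hn).symm⟩)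

theorem positive_recurrent_iff_projection_limit_general (U : ℕ → ℕ → ℝ)
    (hut : ∀ i j, j + 1 < i → U i j = 0)
    (hirr : MatIrreducible U)
    (ρ : ℕ → ℕ → ℝ)
    (hρsum : ∀ n, ∑ a ∈ Finset.range (n + 1), ρ n a = 1)
    (hρinv : ∀ n, ∀ b ≤ n, ∑ a ∈ Finset.range (n + 1), ρ n a * projTM U n a b = ρ n b)
    (ρlim : ℕ → ℝ) (hρlim1 : HasSum ρlim 1) :
    (∀ b, HasSum (fun a => ρlim a * U a b) (ρlim b)) ↔
      ∀ a, Filter.Tendsto (fun n => ρ n a) Filter.atTop (nhds (ρlim a)) := by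
  have hM : AlmostUpperTriangular U := hut
  have hd : ∀ b, U (b + 1) b ≠ 0 := fun b => (hirr.subdiag_pos hM b).ne'
  have hbal : ∀ n, ∀ b < n, ColumnBalance U (ρ n) b := fun n b hb =>
    hM.columnBalance_of_projTM hb (hρinv n b hb.le)
  constructor
  · intro hinv
    have hlim : ∀ b, ColumnBalance U ρlim b := fun b => hM.hasSum_iff_columnBalance.1 (hinv b)
    have hρlim0 : ρlim 0 ≠ 0 := fun h0 => by
      have := eq_zero_of_columnBalance hd hlim h0
      subst this
      exact one_ne_zero (hρlim1.unique hasSum_zero)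
    exact tendsto_of_proportional hρsum hρlim1 hρlim0 fun n =>
      mul_eq_mul_of_columnBalance (fun b _ => hd b) (fun b _ => hlim b) (hbal n)
  · intro hlim b
    exact hM.hasSum_iff_columnBalance.2 <|
      ColumnBalance.of_tendsto hlim ((eventually_gt_atTop b).mono fun n hn => hbal n b hn)

/-- Theorem 2.7 (ii): a probability distribution `ρ` on `ℕ` is invariant for the
irreducible almost upper triangular transition matrix `U` (positive recurrence with
stationary distribution `ρ`) iff `ρ^{(n)} → ρ` pointwise, where `ρ^{(n)}` is the
invariant probability distribution of the projection `U^{(n)}` (extended by `0`). -/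
theorem positive_recurrent_iff_projection_limit (U : ℕ → ℕ → ℝ)
    (hnn : ∀ i j, 0 ≤ U i j)
    (hrow : ∀ i, HasSum (fun j => U i j) 1)
    (hut : ∀ i j, j + 1 < i → U i j = 0)
    (hirr : MatIrreducible U)
    (ρ : ℕ → ℕ → ℝ)
    (hρnn : ∀ n a, 0 ≤ ρ n a)
    (hρzero : ∀ n a, n < a → ρ n a = 0)
    (hρsum : ∀ n, ∑ a ∈ Finset.range (n + 1), ρ n a = 1)
    (hρinv : ∀ n, ∀ b ≤ n, ∑ a ∈ Finset.range (n + 1), ρ n a * projTM U n a b = ρ n b)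
    (ρlim : ℕ → ℝ) (hρlimnn : ∀ a, 0 ≤ ρlim a) (hρlim1 : HasSum ρlim 1) :
    (∀ b, HasSum (fun a => ρlim a * U a b) (ρlim b)) ↔
      ∀ a, Filter.Tendsto (fun n => ρ n a) Filter.atTop (nhds (ρlim a)) :=
  positive_recurrent_iff_projection_limit_general U hut hirr ρ hρsum hρinv ρlim hρlim1
end

section
/- Let L be an irreducible almost lower triangular transition matrix on ℕ and, for each n, let ρ^{(n)} be an invariant probability distribution of the projection L^{(n)} of L onto {0,…,n}, extended by 0 to all of ℕ. If there exists ρ : ℕ → ℝ with ρ a ≥ 0 for all a and ∑_a ρ a = 1, such that ρ^{(n)} a → ρ a as n → ∞ for every a, then ρ is invariant for L: for every b the series ∑_a ρ a · L a b converges with sum ρ b. -/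
/-!
Scheffé's lemma for sequences: pointwise convergence of the probability vectors `ρ^{(n)}` to the
probability vector `ρ` upgrades to convergence in `ℓ¹`. Since every column `a ↦ L a b` is bounded
by `1`, the sums `∑_{a ≤ n} ρ^{(n)} a L a b` and `∑_{a ≤ n} ρ a L a b` then have the same limit.
For `n > b` the first one equals `ρ^{(n)} b`, because `L^{(n)}` agrees with `L` in column `b`;
it therefore tends to `ρ b`, and so the series `∑_a ρ a L a b` sums to `ρ b`.
-/

open Filter Topology Finset

section Scheffe

variable {α β : Type*} {l : Filter α} {s : α → Finset β} {p : α → β → ℝ} {q : β → ℝ}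

theorem tendsto_sum_abs_sub_of_tendsto (hs : Tendsto s l atTop) (hp : ∀ n a, 0 ≤ p n a)
    (hp1 : ∀ n, ∑ a ∈ s n, p n a = 1) (hq : ∀ a, 0 ≤ q a) (hq1 : HasSum q 1)
    (hpq : ∀ a, Tendsto (fun n => p n a) l (𝓝 (q a))) :
    Tendsto (fun n => ∑ a ∈ s n, |p n a - q a|) l (𝓝 0) := by
  -- `|x| = x + 2 max (-x) 0`, and the negative parts `max (q - p n) 0 ≤ q` are dominated.
  have habs : ∀ n, ∑ a ∈ s n, |p n a - q a|
      = (1 - ∑ a ∈ s n, q a) + 2 * ∑ a ∈ s n, max (q a - p n a) 0 := by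
    intro n
    rw [← hp1 n, ← sum_sub_distrib, mul_sum, ← sum_add_distrib]
    refine sum_congr rfl fun a _ => ?_
    rcases le_total (p n a) (q a) with h | h
    · rw [abs_of_nonpos (by linarith), max_eq_left (by linarith)]; ring
    · rw [abs_of_nonneg (by linarith), max_eq_right (by linarith)]; ring
  have hneg_le : ∀ n a, max (q a - p n a) 0 ≤ q a := fun n a =>
    max_le (by linarith [hp n a]) (hq a)
  have hneg_summable : ∀ n, Summable fun a => max (q a - p n a) 0 := fun n =>
    hq1.summable.of_nonneg_of_le (fun _ => le_max_right _ _) (hneg_le n)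
  have hneg_tsum : Tendsto (fun n => ∑' a, max (q a - p n a) 0) l (𝓝 0) := by
    have := tendsto_tsum_of_dominated_convergence hq1.summable
      (fun a => ((hpq a).const_sub (q a)).max tendsto_const_nhds)
      (Eventually.of_forall fun n a => by
        rw [Real.norm_of_nonneg (le_max_right _ _)]; exact hneg_le n a)
    simpa using this
  have hneg : Tendsto (fun n => ∑ a ∈ s n, max (q a - p n a) 0) l (𝓝 0) :=
    squeeze_zero (fun n => sum_nonneg fun _ _ => le_max_right _ _)
      (fun n => (hneg_summable n).sum_le_tsum _ fun _ _ => le_max_right _ _) hneg_tsum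
  have hmass : Tendsto (fun n => 1 - ∑ a ∈ s n, q a) l (𝓝 0) := by
    simpa using (hq1.comp hs).const_sub 1
  simpa [habs] using hmass.add (hneg.const_mul 2)

theorem tendsto_sum_mul_sub_sum_mul_of_tendsto_sum_abs_sub {w : β → ℝ} {C : ℝ}
    (hw : ∀ a, |w a| ≤ C) (h : Tendsto (fun n => ∑ a ∈ s n, |p n a - q a|) l (𝓝 0)) :
    Tendsto (fun n => ∑ a ∈ s n, p n a * w a - ∑ a ∈ s n, q a * w a) l (𝓝 0) := by
  refine squeeze_zero_norm (fun n => ?_) (by simpa using h.const_mul C)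
  rw [← sum_sub_distrib, mul_sum]
  refine (norm_sum_le _ _).trans (sum_le_sum fun a _ => ?_)
  rw [← sub_mul, Real.norm_eq_abs, abs_mul, mul_comm]
  exact mul_le_mul_of_nonneg_right (hw a) (abs_nonneg _)

end Scheffe

theorem projTM_of_lt (M : ℕ → ℕ → ℝ) {n i j : ℕ} (hj : j < n) : projTM M n i j = M i j :=
  if_pos hj

theorem weak_limit_of_projection_invariants_is_invariant_general (L : ℕ → ℕ → ℝ)
    (hnn : ∀ i j, 0 ≤ L i j)
    (hrow : ∀ i, HasSum (fun j => L i j) 1)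
    (ρ : ℕ → ℕ → ℝ)
    (hρnn : ∀ n a, 0 ≤ ρ n a)
    (hρsum : ∀ n, ∑ a ∈ Finset.range (n + 1), ρ n a = 1)
    (hρinv : ∀ n, ∀ b ≤ n, ∑ a ∈ Finset.range (n + 1), ρ n a * projTM L n a b = ρ n b)
    (ρlim : ℕ → ℝ) (hρlimnn : ∀ a, 0 ≤ ρlim a) (hρlim1 : HasSum ρlim 1)
    (hconv : ∀ a, Filter.Tendsto (fun n => ρ n a) Filter.atTop (nhds (ρlim a))) :
    ∀ b, HasSum (fun a => ρlim a * L a b) (ρlim b) := by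
  intro b
  have hcol : ∀ a, |L a b| ≤ 1 := fun a =>
    (abs_of_nonneg (hnn a b)).trans_le (le_hasSum (hrow a) b fun j _ => hnn a j)
  have hℓ1 := tendsto_sum_abs_sub_of_tendsto
    (tendsto_finset_range.comp (tendsto_add_atTop_nat 1)) hρnn hρsum hρlimnn hρlim1 hconv
  have hinv : ∀ᶠ n in atTop, ρ n b = ∑ a ∈ range (n + 1), ρ n a * L a b := by
    filter_upwards [eventually_gt_atTop b] with n hn
    simp only [← hρinv n b hn.le, projTM_of_lt L hn]
  have hpartial : Tendsto (fun n => ∑ a ∈ range (n + 1), ρlim a * L a b) atTop (𝓝 (ρlim b)) := by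
    simpa using ((hconv b).congr' hinv).sub
      (tendsto_sum_mul_sub_sum_mul_of_tendsto_sum_abs_sub hcol hℓ1)
  have hsummable : Summable fun a => ρlim a * L a b :=
    hρlim1.summable.of_nonneg_of_le (fun a => mul_nonneg (hρlimnn a) (hnn a b))
      fun a => mul_le_of_le_one_right (hρlimnn a) ((le_abs_self _).trans (hcol a))
  exact hsummable.hasSum_iff_tendsto_nat.mpr ((tendsto_add_atTop_iff_nat 1).mp hpartial)

/-- Proposition 3.8: if the invariant probability distributions `ρ^{(n)}` of the
projections `L^{(n)}` (extended by `0`) converge weakly to a probability measure `ρ`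
on `ℕ`, then `ρ` is invariant for the irreducible almost lower triangular transition
matrix `L`. -/
theorem weak_limit_of_projection_invariants_is_invariant (L : ℕ → ℕ → ℝ)
    (hnn : ∀ i j, 0 ≤ L i j)
    (hrow : ∀ i, HasSum (fun j => L i j) 1)
    (hlt : ∀ i j, i + 1 < j → L i j = 0)
    (hirr : MatIrreducible L)
    (ρ : ℕ → ℕ → ℝ)
    (hρnn : ∀ n a, 0 ≤ ρ n a)
    (hρzero : ∀ n a, n < a → ρ n a = 0)
    (hρsum : ∀ n, ∑ a ∈ Finset.range (n + 1), ρ n a = 1)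
    (hρinv : ∀ n, ∀ b ≤ n, ∑ a ∈ Finset.range (n + 1), ρ n a * projTM L n a b = ρ n b)
    (ρlim : ℕ → ℝ) (hρlimnn : ∀ a, 0 ≤ ρlim a) (hρlim1 : HasSum ρlim 1)
    (hconv : ∀ a, Filter.Tendsto (fun n => ρ n a) Filter.atTop (nhds (ρlim a))) :
    ∀ b, HasSum (fun a => ρlim a * L a b) (ρlim b) :=
  weak_limit_of_projection_invariants_is_invariant_general L hnn hrow ρ hρnn hρsum hρinv ρlim
    hρlimnn hρlim1 hconv
end
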